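/- arXiv:1612.03409 — 5 statements merged into one kernel-verified Lean document; each statement's English description precedes it below -/
import Mathlib

section
/- Let M ∈ R^{n×k} have rank k, ω_j > 0, and suppose E E' = M diag(Ω) M' with E ∈ R^{n×k} of rank k. Fix a row index r, let E_r (resp. M_r) denote E (resp. M) with row r deleted, and suppose E_r still has rank k. If O and O_r are orthogonal matrices satisfying E O = M diag(Ω)^{1/2} and E_r O_r = M_r diag(Ω)^{1/2}, then O = O_r. -/
open Matrix

/-- Deleting row `r` of a matrix. -/
def dropRow {n k : ℕ} (A : Matrix (Fin n) (Fin k) ℝ) (r : Fin n) :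
    Matrix {i : Fin n // i ≠ r} (Fin k) ℝ :=
  fun i j => A i.1 j

lemma isUnit_of_rank_eq_card {m : Type*} [Fintype m] [DecidableEq m]
    (A : Matrix m m ℝ) (h : A.rank = Fintype.card m) : IsUnit A := by
  rw [← Matrix.mulVec_surjective_iff_isUnit]
  have : LinearMap.range A.mulVecLin = ⊤ := by
    apply Submodule.eq_top_of_finrank_eq
    rw [show Module.finrank ℝ ↥(LinearMap.range A.mulVecLin) = A.rank from rfl, h,
      Module.finrank_pi]
  intro v
  obtain ⟨w, hw⟩ := (LinearMap.range_eq_top.mp this) v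
  exact ⟨w, hw⟩

/-- Let `M ∈ ℝ^{n×k}` have rank `k`, `ω_j > 0`, `E Eᵀ = M diag(ω) Mᵀ` with `E` of
rank `k`.  Fix a row `r`; let `E_r`, `M_r` be `E`, `M` with row `r` deleted and
suppose `E_r` still has rank `k`.  If `O` and `O_r` are orthogonal with
`E O = M diag(ω)^{1/2}` and `E_r O_r = M_r diag(ω)^{1/2}`, then `O = O_r`. -/
theorem isometry_independent_of_dropped_row
    {n k : ℕ} (M E : Matrix (Fin n) (Fin k) ℝ) (ω : Fin k → ℝ) (r : Fin n)
    (hω : ∀ j, 0 < ω j)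
    (hM : M.rank = k) (hE : E.rank = k) (hEr : (dropRow E r).rank = k)
    (hfact : E * Eᵀ = M * Matrix.diagonal ω * Mᵀ)
    (O Or : Matrix (Fin k) (Fin k) ℝ)
    (hO : Oᵀ * O = 1) (hOr : Orᵀ * Or = 1)
    (hEO : E * O = M * Matrix.diagonal (fun j => Real.sqrt (ω j)))
    (hErOr : dropRow E r * Or
      = dropRow M r * Matrix.diagonal (fun j => Real.sqrt (ω j))) :
    O = Or := by
  have h1 : dropRow E r * O = dropRow E r * Or := by
    rw [hErOr]
    ext i j
    have := congrFun (congrFun hEO i.1) j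
    simpa [dropRow, Matrix.mul_apply] using this
  have hG : IsUnit ((dropRow E r)ᵀ * dropRow E r) := by
    apply isUnit_of_rank_eq_card
    rw [Matrix.rank_transpose_mul_self, hEr, Fintype.card_fin]
  have h2 : (dropRow E r)ᵀ * dropRow E r * O = (dropRow E r)ᵀ * dropRow E r * Or := by
    rw [Matrix.mul_assoc, Matrix.mul_assoc, h1]
  exact hG.mul_left_cancel h2
end

section
/- Let M ∈ R^{n×k} with rank k, ω_j > 0, and fix r. Let M_r be M with row r removed (assumed rank k), M_{3,r} = M_r diag(Ω) diag(μ_{r,1},...,μ_{r,k}) M_r', and suppose E_r O = M_r diag(Ω)^{1/2} with E_r of rank k and O orthogonal. Then E_r^⋆ M_{3,r} (E_r')^⋆ = O diag(μ_{r,1},...,μ_{r,k}) O', where E_r^⋆ is the Moore–Penrose pseudoinverse of E_r. -/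
open Matrix

/-- Moore–Penrose pseudoinverse of a full-column-rank matrix: `A⋆ = (AᵀA)⁻¹Aᵀ`. -/
noncomputable def pinv {m : Type*} [Fintype m] {k : ℕ}
    (A : Matrix m (Fin k) ℝ) : Matrix (Fin k) m ℝ :=
  (Aᵀ * A)⁻¹ * Aᵀ

lemma isUnit_gram {m : Type*} [Fintype m] {k : ℕ}
    (A : Matrix m (Fin k) ℝ) (hA : A.rank = k) : IsUnit (Aᵀ * A) := by
  rw [← Matrix.mulVec_surjective_iff_isUnit]
  have hrank : (Aᵀ * A).rank = k := by rw [Matrix.rank_transpose_mul_self, hA]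
  have htop : LinearMap.range (Aᵀ * A).mulVecLin = ⊤ := by
    apply Submodule.eq_top_of_finrank_eq
    rw [← Matrix.rank, hrank]
    simp [Module.finrank_pi]
  exact LinearMap.range_eq_top.mp htop

lemma pinv_mul {m : Type*} [Fintype m] {k : ℕ}
    (A : Matrix m (Fin k) ℝ) (hA : A.rank = k) : pinv A * A = 1 := by
  rw [pinv, Matrix.mul_assoc]
  exact Matrix.nonsing_inv_mul _ ((Matrix.isUnit_iff_isUnit_det _).mp (isUnit_gram A hA))

/-- With `M_{3,r} = M_r diag(ω) diag(μ_{r,·}) M_rᵀ` and `E_r O = M_r diag(ω)^{1/2}`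
(`E_r` of rank `k`, `O` orthogonal), we have
`E_r⋆ M_{3,r} (E_rᵀ)⋆ = O diag(μ_{r,·}) Oᵀ`. -/
theorem whitened_slice_diagonalization
    {n k : ℕ} (M : Matrix (Fin n) (Fin k) ℝ) (ω : Fin k → ℝ) (r : Fin n)
    (E_r : Matrix {i : Fin n // i ≠ r} (Fin k) ℝ)
    (O : Matrix (Fin k) (Fin k) ℝ)
    (hω : ∀ j, 0 < ω j)
    (hM : M.rank = k) (hMr : (dropRow M r).rank = k) (hEr : E_r.rank = k)
    (hO : Oᵀ * O = 1)
    (hEO : E_r * O = dropRow M r * Matrix.diagonal (fun j => Real.sqrt (ω j))) :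
    pinv E_r
        * (dropRow M r * Matrix.diagonal ω * Matrix.diagonal (fun j => M r j)
            * (dropRow M r)ᵀ)
        * (pinv E_r)ᵀ
      = O * Matrix.diagonal (fun j => M r j) * Oᵀ := by
  have hsplit : Matrix.diagonal ω
      = Matrix.diagonal (fun j => Real.sqrt (ω j))
        * Matrix.diagonal (fun j => Real.sqrt (ω j)) := by
    rw [Matrix.diagonal_mul_diagonal]
    exact congrArg _ (funext fun j => (Real.mul_self_sqrt (hω j).le).symm)
  have hmid : dropRow M r * Matrix.diagonal ω * Matrix.diagonal (fun j => M r j)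
        * (dropRow M r)ᵀ
      = (E_r * O) * Matrix.diagonal (fun j => M r j) * (E_r * O)ᵀ := by
    rw [hEO, hsplit]
    rw [Matrix.transpose_mul, Matrix.diagonal_transpose]
    have hcomm : Matrix.diagonal (fun j => Real.sqrt (ω j))
          * Matrix.diagonal (fun j => M r j)
        = Matrix.diagonal (fun j => M r j)
          * Matrix.diagonal (fun j => Real.sqrt (ω j)) := by
      rw [Matrix.diagonal_mul_diagonal, Matrix.diagonal_mul_diagonal]
      exact congrArg _ (funext fun j => mul_comm _ _)
    calc dropRow M r * (Matrix.diagonal (fun j => Real.sqrt (ω j))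
            * Matrix.diagonal (fun j => Real.sqrt (ω j)))
          * Matrix.diagonal (fun j => M r j) * (dropRow M r)ᵀ
        = dropRow M r * Matrix.diagonal (fun j => Real.sqrt (ω j))
            * (Matrix.diagonal (fun j => Real.sqrt (ω j))
              * Matrix.diagonal (fun j => M r j)) * (dropRow M r)ᵀ := by
          simp only [Matrix.mul_assoc]
      _ = dropRow M r * Matrix.diagonal (fun j => Real.sqrt (ω j))
            * Matrix.diagonal (fun j => M r j)
            * (Matrix.diagonal (fun j => Real.sqrt (ω j)) * (dropRow M r)ᵀ) := by
          rw [hcomm]; simp only [Matrix.mul_assoc]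
  have h1 : pinv E_r * E_r = 1 := pinv_mul E_r hEr
  have h2 : E_rᵀ * (pinv E_r)ᵀ = 1 := by
    rw [← Matrix.transpose_mul, h1, Matrix.transpose_one]
  calc pinv E_r * (dropRow M r * Matrix.diagonal ω * Matrix.diagonal (fun j => M r j)
        * (dropRow M r)ᵀ) * (pinv E_r)ᵀ
      = pinv E_r * ((E_r * O) * Matrix.diagonal (fun j => M r j)
          * (Oᵀ * E_rᵀ)) * (pinv E_r)ᵀ := by rw [hmid, Matrix.transpose_mul]
    _ = (pinv E_r * E_r) * (O * Matrix.diagonal (fun j => M r j) * Oᵀ)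
          * (E_rᵀ * (pinv E_r)ᵀ) := by simp only [Matrix.mul_assoc]
    _ = O * Matrix.diagonal (fun j => M r j) * Oᵀ := by
          rw [h1, h2, Matrix.one_mul, Matrix.mul_one]
end

section
/- Let A and Ã be real matrices with ||Ã − A||_F < ε. If A = U S V' and Ã = Ũ S̃ Ṽ' are singular value decompositions with singular values in decreasing order, then ||S̃ − S||_F ≤ ε, i.e. the vector of singular values is 1-Lipschitz in Frobenius norm: sqrt(Σ_i (σ_i(Ã) − σ_i(A))^2) ≤ ||Ã − A||_F. -/
open Matrix

/-- Frobenius norm of a real matrix. -/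
noncomputable def frob {m n : Type*} [Fintype m] [Fintype n]
    (A : Matrix m n ℝ) : ℝ :=
  Real.sqrt (∑ i, ∑ j, (A i j) ^ 2)

private lemma dot_svd {n : ℕ} (U V Ut Vt : Matrix (Fin n) (Fin n) ℝ) (s st : Fin n → ℝ) :
    ∑ i, ∑ j, ((U * Matrix.diagonal s * Vᵀ) i j * (Ut * Matrix.diagonal st * Vtᵀ) i j)
    = ∑ k, ∑ l, s k * st l * ((Uᵀ * Ut) k l * (Vᵀ * Vt) k l) := by
  simp only [mul_apply, diagonal_apply, transpose_apply, Finset.sum_mul, Finset.mul_sum,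
    ite_mul, mul_ite, zero_mul, mul_zero, Finset.sum_ite_eq, Finset.sum_ite_eq',
    Finset.mem_univ, if_true]
  conv_lhs => enter [2, a, 2, b]; rw [Finset.sum_comm]
  conv_lhs => enter [2, a]; rw [Finset.sum_comm]
  rw [Finset.sum_comm]
  conv_lhs => enter [2, a, 2, b]; rw [Finset.sum_comm]
  conv_lhs => enter [2, a]; rw [Finset.sum_comm]
  conv_lhs => enter [2, a, 2, b]; rw [Finset.sum_comm]
  refine Finset.sum_congr rfl fun _ _ => Finset.sum_congr rfl fun _ _ =>
    Finset.sum_congr rfl fun _ _ => Finset.sum_congr rfl fun _ _ => by ring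

private lemma ds_expand {n : ℕ} (s st : Fin n → ℝ) (w : Equiv.Perm (Fin n) → ℝ) :
    ∑ k, ∑ l, s k * st l * (∑ π : Equiv.Perm (Fin n), w π • π.permMatrix ℝ) k l
    = ∑ π : Equiv.Perm (Fin n), w π * ∑ k, s k * st (π k) := by
  have hMkl : ∀ k l, (∑ π : Equiv.Perm (Fin n), w π • π.permMatrix ℝ) k l
      = ∑ π : Equiv.Perm (Fin n), w π * (if π k = l then 1 else 0) := by
    intro k l
    simp [Matrix.sum_apply, Equiv.Perm.permMatrix, PEquiv.toMatrix_apply,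
      Equiv.toPEquiv_apply, eq_comm]
  calc ∑ k, ∑ l, s k * st l * (∑ π : Equiv.Perm (Fin n), w π • π.permMatrix ℝ) k l
      = ∑ k, ∑ l, ∑ π : Equiv.Perm (Fin n),
          s k * st l * (w π * (if π k = l then 1 else 0)) := by
        simp only [hMkl, Finset.mul_sum]
    _ = ∑ k, ∑ π : Equiv.Perm (Fin n), ∑ l,
          s k * st l * (w π * (if π k = l then 1 else 0)) :=
        Finset.sum_congr rfl fun k _ => Finset.sum_comm
    _ = ∑ π : Equiv.Perm (Fin n), ∑ k, ∑ l,
          s k * st l * (w π * (if π k = l then 1 else 0)) := Finset.sum_comm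
    _ = ∑ π : Equiv.Perm (Fin n), w π * ∑ k, s k * st (π k) := by
        refine Finset.sum_congr rfl fun π _ => ?_
        rw [Finset.mul_sum]
        refine Finset.sum_congr rfl fun k _ => ?_
        simp [mul_ite, Finset.sum_ite_eq, Finset.sum_ite_eq']
        ring

private lemma ds_bound {n : ℕ} (s st : Fin n → ℝ)
    (hmono : ∀ i j : Fin n, i ≤ j → s j ≤ s i)
    (hstmono : ∀ i j : Fin n, i ≤ j → st j ≤ st i)
    (M : Matrix (Fin n) (Fin n) ℝ) (hM : M ∈ doublyStochastic ℝ (Fin n)) :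
    ∑ k, ∑ l, s k * st l * M k l ≤ ∑ k, s k * st k := by
  have hmv : Monovary s st := by
    intro i j hij
    rcases le_total i j with h | h
    · exact absurd (hstmono i j h) (not_le.2 hij)
    · exact hmono j i h
  obtain ⟨w, hw0, hw1, hwM⟩ := exists_eq_sum_perm_of_mem_doublyStochastic hM
  have hrearr : ∀ π : Equiv.Perm (Fin n), ∑ k, s k * st (π k) ≤ ∑ k, s k * st k := by
    intro π
    simpa [smul_eq_mul] using hmv.sum_smul_comp_perm_le_sum_smul (σ := π)
  calc ∑ k, ∑ l, s k * st l * M k l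
      = ∑ π : Equiv.Perm (Fin n), w π * ∑ k, s k * st (π k) := by
        rw [← hwM]; exact ds_expand s st w
    _ ≤ ∑ π : Equiv.Perm (Fin n), w π * ∑ k, s k * st k :=
        Finset.sum_le_sum fun π _ => mul_le_mul_of_nonneg_left (hrearr π) (hw0 π)
    _ = ∑ k, s k * st k := by rw [← Finset.sum_mul, hw1, one_mul]

/-- von Neumann trace-style inequality, entrywise form. -/
private lemma vonNeumann {n : ℕ} (U V Util Vtil : Matrix (Fin n) (Fin n) ℝ)
    (σ σtil : Fin n → ℝ)
    (hU : Uᵀ * U = 1) (hV : Vᵀ * V = 1)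
    (hUtil : Utilᵀ * Util = 1) (hVtil : Vtilᵀ * Vtil = 1)
    (hσpos : ∀ i, 0 ≤ σ i) (hσtilpos : ∀ i, 0 ≤ σtil i)
    (hσmono : ∀ i j : Fin n, i ≤ j → σ j ≤ σ i)
    (hσtilmono : ∀ i j : Fin n, i ≤ j → σtil j ≤ σtil i) :
    ∑ i, ∑ j, ((U * Matrix.diagonal σ * Vᵀ) i j * (Util * Matrix.diagonal σtil * Vtilᵀ) i j)
    ≤ ∑ k, σ k * σtil k := by
  set W : Matrix (Fin n) (Fin n) ℝ := Uᵀ * Util with hW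
  set Z : Matrix (Fin n) (Fin n) ℝ := Vᵀ * Vtil with hZ
  have hUU : U * Uᵀ = 1 := mul_eq_one_comm.mp hU
  have hVV : V * Vᵀ = 1 := mul_eq_one_comm.mp hV
  have hUtUt : Util * Utilᵀ = 1 := mul_eq_one_comm.mp hUtil
  have hVtVt : Vtil * Vtilᵀ = 1 := mul_eq_one_comm.mp hVtil
  have hWo1 : W * Wᵀ = 1 := by
    rw [hW, transpose_mul, transpose_transpose, Matrix.mul_assoc, ← Matrix.mul_assoc Util,
      hUtUt, Matrix.one_mul, hU]
  have hWo2 : Wᵀ * W = 1 := by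
    rw [hW, transpose_mul, transpose_transpose, Matrix.mul_assoc, ← Matrix.mul_assoc U,
      hUU, Matrix.one_mul, hUtil]
  have hZo1 : Z * Zᵀ = 1 := by
    rw [hZ, transpose_mul, transpose_transpose, Matrix.mul_assoc, ← Matrix.mul_assoc Vtil,
      hVtVt, Matrix.one_mul, hV]
  have hZo2 : Zᵀ * Z = 1 := by
    rw [hZ, transpose_mul, transpose_transpose, Matrix.mul_assoc, ← Matrix.mul_assoc V,
      hVV, Matrix.one_mul, hVtil]
  -- row and column sums of squared entries
  have hrowW : ∀ k, ∑ l, (W k l) ^ 2 = 1 := by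
    intro k
    have := congrFun (congrFun hWo1 k) k
    simpa [mul_apply, transpose_apply, one_apply, pow_two] using this
  have hcolW : ∀ l, ∑ k, (W k l) ^ 2 = 1 := by
    intro l
    have := congrFun (congrFun hWo2 l) l
    simpa [mul_apply, transpose_apply, one_apply, pow_two, mul_comm] using this
  have hrowZ : ∀ k, ∑ l, (Z k l) ^ 2 = 1 := by
    intro k
    have := congrFun (congrFun hZo1 k) k
    simpa [mul_apply, transpose_apply, one_apply, pow_two] using this
  have hcolZ : ∀ l, ∑ k, (Z k l) ^ 2 = 1 := by
    intro l
    have := congrFun (congrFun hZo2 l) l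
    simpa [mul_apply, transpose_apply, one_apply, pow_two, mul_comm] using this
  set M : Matrix (Fin n) (Fin n) ℝ :=
    Matrix.of fun k l => ((W k l) ^ 2 + (Z k l) ^ 2) / 2 with hM
  have hMds : M ∈ doublyStochastic ℝ (Fin n) := by
    rw [mem_doublyStochastic_iff_sum]
    refine ⟨fun i j => by simp only [hM, Matrix.of_apply]; positivity, fun i => ?_, fun j => ?_⟩
    · simp only [hM, Matrix.of_apply]
      rw [← Finset.sum_div, Finset.sum_add_distrib, hrowW, hrowZ]
      norm_num
    · simp only [hM, Matrix.of_apply]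
      rw [← Finset.sum_div, Finset.sum_add_distrib, hcolW, hcolZ]
      norm_num
  calc ∑ i, ∑ j, ((U * Matrix.diagonal σ * Vᵀ) i j * (Util * Matrix.diagonal σtil * Vtilᵀ) i j)
      = ∑ k, ∑ l, σ k * σtil l * (W k l * Z k l) := dot_svd U V Util Vtil σ σtil
    _ ≤ ∑ k, ∑ l, σ k * σtil l * M k l := by
        refine Finset.sum_le_sum fun k _ => Finset.sum_le_sum fun l _ => ?_
        refine mul_le_mul_of_nonneg_left ?_ (mul_nonneg (hσpos k) (hσtilpos l))
        have h2 : 2 * (W k l * Z k l) ≤ (W k l) ^ 2 + (Z k l) ^ 2 := by nlinarith [sq_nonneg (W k l - Z k l)]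
        simp only [hM, Matrix.of_apply]
        linarith
    _ ≤ ∑ k, σ k * σtil k := ds_bound σ σtil hσmono hσtilmono M hMds

/-- Mirsky / Hoffman–Wielandt inequality for singular values: if
`A = U diag(σ) Vᵀ` and `Ã = Ũ diag(σ̃) Ṽᵀ` are singular value decompositions
(orthogonal `U, V, Ũ, Ṽ`; singular values nonnegative and in decreasing order)
and `‖Ã − A‖_F < ε`, then `√(∑ (σ̃_i − σ_i)²) ≤ ‖Ã − A‖_F ≤ ε`; in particular
the vector of singular values is 1-Lipschitz in Frobenius norm. -/
theorem singular_values_lipschitz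
    {n : ℕ} (A Atil U V Util Vtil : Matrix (Fin n) (Fin n) ℝ)
    (σ σtil : Fin n → ℝ) (ε : ℝ)
    (hU : Uᵀ * U = 1) (hV : Vᵀ * V = 1)
    (hUtil : Utilᵀ * Util = 1) (hVtil : Vtilᵀ * Vtil = 1)
    (hA : A = U * Matrix.diagonal σ * Vᵀ)
    (hAtil : Atil = Util * Matrix.diagonal σtil * Vtilᵀ)
    (hσpos : ∀ i, 0 ≤ σ i) (hσtilpos : ∀ i, 0 ≤ σtil i)
    (hσmono : ∀ i j : Fin n, i ≤ j → σ j ≤ σ i)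
    (hσtilmono : ∀ i j : Fin n, i ≤ j → σtil j ≤ σtil i)
    (hpert : frob (Atil - A) < ε) :
    Real.sqrt (∑ i, (σtil i - σ i) ^ 2) ≤ frob (Atil - A) ∧
    Real.sqrt (∑ i, (σtil i - σ i) ^ 2) < ε := by
  -- ∑ A_ij² = ∑ σ²
  have hAA : ∑ i, ∑ j, (A i j) ^ 2 = ∑ k, σ k ^ 2 := by
    have := dot_svd U V U V σ σ
    rw [hU, hV] at this
    rw [hA]
    simp only [pow_two]
    rw [this]
    simp [one_apply, mul_ite, Finset.sum_ite_eq, pow_two]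
  have hAtAt : ∑ i, ∑ j, (Atil i j) ^ 2 = ∑ k, σtil k ^ 2 := by
    have := dot_svd Util Vtil Util Vtil σtil σtil
    rw [hUtil, hVtil] at this
    rw [hAtil]
    simp only [pow_two]
    rw [this]
    simp [one_apply, mul_ite, Finset.sum_ite_eq, pow_two]
  have hvn : ∑ i, ∑ j, (A i j * Atil i j) ≤ ∑ k, σ k * σtil k := by
    rw [hA, hAtil]
    exact vonNeumann U V Util Vtil σ σtil hU hV hUtil hVtil hσpos hσtilpos hσmono hσtilmono
  have key : ∑ i, (σtil i - σ i) ^ 2 ≤ ∑ i, ∑ j, ((Atil - A) i j) ^ 2 := by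
    have hexp : ∑ i, ∑ j, ((Atil - A) i j) ^ 2
        = ∑ i, ∑ j, (Atil i j) ^ 2 - 2 * (∑ i, ∑ j, (A i j * Atil i j))
          + ∑ i, ∑ j, (A i j) ^ 2 := by
      have : ∀ i j : Fin n, ((Atil - A) i j) ^ 2
          = (Atil i j) ^ 2 - 2 * (A i j * Atil i j) + (A i j) ^ 2 := by
        intro i j; simp only [Matrix.sub_apply]; ring
      simp only [this, Finset.sum_add_distrib, Finset.sum_sub_distrib, ← Finset.mul_sum]
    have hexp2 : ∑ i, (σtil i - σ i) ^ 2
        = ∑ k, σtil k ^ 2 - 2 * (∑ k, σ k * σtil k) + ∑ k, σ k ^ 2 := by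
      have : ∀ k : Fin n, (σtil k - σ k) ^ 2
          = σtil k ^ 2 - 2 * (σ k * σtil k) + σ k ^ 2 := fun k => by ring
      simp only [this, Finset.sum_add_distrib, Finset.sum_sub_distrib, ← Finset.mul_sum]
    rw [hexp, hexp2, hAA, hAtAt]
    linarith
  have h1 : Real.sqrt (∑ i, (σtil i - σ i) ^ 2) ≤ frob (Atil - A) := by
    unfold frob
    exact Real.sqrt_le_sqrt key
  exact ⟨h1, lt_of_le_of_lt h1 hpert⟩
end

section
/- Let A and Ã = A + Δ be symmetric real n×n matrices with eigenvalues λ_1 ≥ ... ≥ λ_n and λ̃_1 ≥ ... ≥ λ̃_n. Fix j with gap := min(λ_{j-1} − λ_j, λ_j − λ_{j+1}) > 0 (with λ_0 = +∞, λ_{n+1} = −∞). Then there exist unit eigenvectors v of A for λ_j and ṽ of Ã for λ̃_j such that ||v − ṽ|| ≤ 2^{3/2} ||A − Ã|| / gap. -/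
/-!
Let `u i` and `ũ i` be the orthonormal eigenbases of `A` and `Ã` given by the columns of `U` and
`Ũ`, let `ε = ‖A - Ã‖` and `c i = ⟪u i, ũ j⟫`. Expanding in the basis `u`,
`∑ i, (λ i - λ̃ j)² c i² = ‖(A - λ̃ j) ũ j‖² = ‖(A - Ã) ũ j‖² ≤ ε²`.
Weyl's inequality `|λ j - λ̃ j| ≤ ε` follows by testing both quadratic forms on a nonzero vector of
`span {ũ i | i ≤ j} ⊓ span {u i | j ≤ i}`, which exists by counting dimensions. Hence if `2ε < g`,
every `λ i` with `i ≠ j` is at distance at least `g / 2` from `λ̃ j`, and so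
`1 - c j² ≤ 4ε² / g²`; if `2ε ≥ g` this bound is trivial. Finally `v = ± u j`, with the sign
making `⟪v, ũ j⟫ = |c j|`, satisfies `‖v - ũ j‖² = 2 - 2|c j| ≤ 2 (1 - c j²) ≤ 8ε² / g²`.
-/

open Matrix

open scoped RealInnerProductSpace

lemma exists_mem_pair_norm_sub_sq_le {E : Type*} [NormedAddCommGroup E] [InnerProductSpace ℝ E]
    {u w : E} (hu : ‖u‖ = 1) (hw : ‖w‖ = 1) :
    ∃ v ∈ ({u, -u} : Set E), ‖v - w‖ ^ 2 ≤ 2 * (1 - ⟪u, w⟫ ^ 2) := by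
  have hcs : |⟪u, w⟫| ≤ 1 := by simpa [hu, hw] using abs_real_inner_le_norm u w
  have key : ∀ v : E, ‖v‖ = 1 → ⟪v, w⟫ = |⟪u, w⟫| → ‖v - w‖ ^ 2 ≤ 2 * (1 - ⟪u, w⟫ ^ 2) := by
    intro v hv hvw
    rw [norm_sub_sq_real, hv, hw, hvw, ← sq_abs ⟪u, w⟫]
    nlinarith [abs_nonneg ⟪u, w⟫]
  rcases le_or_gt 0 ⟪u, w⟫ with h | h
  · exact ⟨u, .inl rfl, key u hu (abs_of_nonneg h).symm⟩
  · exact ⟨-u, .inr rfl, key (-u) (by rw [norm_neg, hu]) (by rw [inner_neg_left, abs_of_neg h])⟩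

namespace OrthonormalBasis

variable {ι E : Type*} [Fintype ι] [NormedAddCommGroup E] [InnerProductSpace ℝ E]
  (b : OrthonormalBasis ι ℝ E) {T : E →L[ℝ] E} {lam : ι → ℝ}

lemma inner_map_of_apply_eq_smul (hT : ∀ i, T (b i) = lam i • b i) (i : ι) (x : E) :
    ⟪b i, T x⟫ = lam i * ⟪b i, x⟫ := by
  classical
  conv_lhs => rw [← b.sum_repr' x]
  simp [hT, inner_sum, inner_smul_right, b.inner_eq_ite, mul_comm]

lemma inner_map_self_eq_sum (hT : ∀ i, T (b i) = lam i • b i) (x : E) :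
    ⟪x, T x⟫ = ∑ i, lam i * ⟪b i, x⟫ ^ 2 := by
  rw [← b.sum_inner_mul_inner x (T x)]
  refine Finset.sum_congr rfl fun i _ => ?_
  rw [b.inner_map_of_apply_eq_smul hT, real_inner_comm]
  ring

lemma norm_apply_sub_smul_sq (hT : ∀ i, T (b i) = lam i • b i) (μ : ℝ) (x : E) :
    ‖T x - μ • x‖ ^ 2 = ∑ i, (lam i - μ) ^ 2 * ⟪b i, x⟫ ^ 2 := by
  rw [← b.sum_sq_inner_right]
  refine Finset.sum_congr rfl fun i _ => ?_
  rw [inner_sub_right, inner_smul_right, b.inner_map_of_apply_eq_smul hT]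
  ring

lemma sq_mul_norm_sq_sub_inner_sq_le (hT : ∀ i, T (b i) = lam i • b i) {j : ι} {μ d : ℝ}
    (hd : 0 ≤ d) (hgap : ∀ i ≠ j, d ≤ |lam i - μ|) (w : E) :
    d ^ 2 * (‖w‖ ^ 2 - ⟪b j, w⟫ ^ 2) ≤ ‖T w - μ • w‖ ^ 2 := by
  classical
  calc
    d ^ 2 * (‖w‖ ^ 2 - ⟪b j, w⟫ ^ 2) = ∑ i ∈ Finset.univ.erase j, d ^ 2 * ⟪b i, w⟫ ^ 2 := by
      rw [← b.sum_sq_inner_right, ← Finset.sum_erase_add _ _ (Finset.mem_univ j),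
        add_sub_cancel_right, Finset.mul_sum]
    _ ≤ ∑ i ∈ Finset.univ.erase j, (lam i - μ) ^ 2 * ⟪b i, w⟫ ^ 2 := by
      refine Finset.sum_le_sum fun i hi => ?_
      refine mul_le_mul_of_nonneg_right ?_ (sq_nonneg _)
      rw [← sq_abs (lam i - μ)]
      exact pow_le_pow_left₀ hd (hgap i (Finset.ne_of_mem_erase hi)) 2
    _ ≤ ∑ i, (lam i - μ) ^ 2 * ⟪b i, w⟫ ^ 2 :=
      Finset.sum_le_sum_of_subset_of_nonneg (Finset.erase_subset _ _) fun _ _ _ => by positivity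
    _ = ‖T w - μ • w‖ ^ 2 := (b.norm_apply_sub_smul_sq hT μ w).symm

variable [LinearOrder ι]

lemma inner_map_self_le (hT : ∀ i, T (b i) = lam i • b i) (hlam : Antitone lam) {j : ι}
    {x : E} (hx : ∀ i < j, ⟪b i, x⟫ = 0) : ⟪x, T x⟫ ≤ lam j * ‖x‖ ^ 2 := by
  rw [b.inner_map_self_eq_sum hT, ← b.sum_sq_inner_right, Finset.mul_sum]
  refine Finset.sum_le_sum fun i _ => ?_
  rcases lt_or_ge i j with h | h
  · simp [hx i h]
  · exact mul_le_mul_of_nonneg_right (hlam h) (sq_nonneg _)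

lemma le_inner_map_self (hT : ∀ i, T (b i) = lam i • b i) (hlam : Antitone lam) {j : ι}
    {x : E} (hx : ∀ i, j < i → ⟪b i, x⟫ = 0) : lam j * ‖x‖ ^ 2 ≤ ⟪x, T x⟫ := by
  rw [b.inner_map_self_eq_sum hT, ← b.sum_sq_inner_right, Finset.mul_sum]
  refine Finset.sum_le_sum fun i _ => ?_
  rcases lt_or_ge j i with h | h
  · simp [hx i h]
  · exact mul_le_mul_of_nonneg_right (hlam h) (sq_nonneg _)

lemma exists_ne_zero_inner_eq_zero (b' : OrthonormalBasis ι ℝ E) (j : ι) :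
    ∃ x ≠ 0, (∀ i < j, ⟪b i, x⟫ = 0) ∧ ∀ i, j < i → ⟪b' i, x⟫ = 0 := by
  let f : E →ₗ[ℝ] ({i // i ≠ j} → ℝ) :=
    LinearMap.pi fun i => if (i : ι) < j then innerₛₗ ℝ (b i) else innerₛₗ ℝ (b' i)
  have : FiniteDimensional ℝ E := b.toBasis.finiteDimensional_of_finite
  have hf : LinearMap.ker f ≠ ⊥ := by
    refine LinearMap.ker_ne_bot_of_finrank_lt ?_
    rw [Module.finrank_fintype_fun_eq_card, Module.finrank_eq_card_basis b.toBasis,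
      Fintype.card_subtype_compl, Fintype.card_subtype_eq]
    have := Fintype.card_pos_iff.2 ⟨j⟩
    omega
  obtain ⟨x, hx, hx0⟩ := Submodule.exists_mem_ne_zero_of_ne_bot hf
  refine ⟨x, hx0, fun i hi => ?_, fun i hi => ?_⟩
  · simpa [f, hi] using congrFun hx ⟨i, hi.ne⟩
  · simpa [f, hi.not_gt] using congrFun hx ⟨i, hi.ne'⟩

variable {b' : OrthonormalBasis ι ℝ E} {T' : E →L[ℝ] E} {lam' : ι → ℝ}

theorem sub_le_opNorm_sub (hT : ∀ i, T (b i) = lam i • b i)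
    (hT' : ∀ i, T' (b' i) = lam' i • b' i) (hlam : Antitone lam) (hlam' : Antitone lam') (j : ι) :
    lam' j - lam j ≤ ‖T' - T‖ := by
  obtain ⟨x, hx0, hxb, hxb'⟩ := b.exists_ne_zero_inner_eq_zero b' j
  have hupper := b.inner_map_self_le hT hlam hxb
  have hlower := b'.le_inner_map_self hT' hlam' hxb'
  have hdiff : ⟪x, T' x⟫ - ⟪x, T x⟫ ≤ ‖T' - T‖ * ‖x‖ ^ 2 := calc
    ⟪x, T' x⟫ - ⟪x, T x⟫ = ⟪x, (T' - T) x⟫ := by rw [← inner_sub_right]; rfl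
    _ ≤ ‖x‖ * ‖(T' - T) x‖ := real_inner_le_norm _ _
    _ ≤ ‖x‖ * (‖T' - T‖ * ‖x‖) := by gcongr; exact (T' - T).le_opNorm x
    _ = ‖T' - T‖ * ‖x‖ ^ 2 := by ring
  have hx : 0 < ‖x‖ ^ 2 := by positivity
  nlinarith

theorem abs_sub_le_opNorm_sub (hT : ∀ i, T (b i) = lam i • b i)
    (hT' : ∀ i, T' (b' i) = lam' i • b' i) (hlam : Antitone lam) (hlam' : Antitone lam') (j : ι) :
    |lam j - lam' j| ≤ ‖T - T'‖ := by
  refine abs_sub_le_iff.2 ⟨?_, ?_⟩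
  · exact b'.sub_le_opNorm_sub hT' hT hlam' hlam j
  · rw [norm_sub_rev]; exact b.sub_le_opNorm_sub hT hT' hlam hlam' j

theorem exists_norm_sub_le_of_eigengap (hT : ∀ i, T (b i) = lam i • b i)
    (hT' : ∀ i, T' (b' i) = lam' i • b' i) (hlam : Antitone lam) (hlam' : Antitone lam') {j : ι}
    {g : ℝ} (hg : 0 < g) (hgap : ∀ i ≠ j, g ≤ |lam i - lam j|) :
    ∃ v : E, ‖v‖ = 1 ∧ T v = lam j • v ∧ ‖v - b' j‖ ≤ 2 ^ ((3 : ℝ) / 2) * ‖T - T'‖ / g := by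
  set ε := ‖T - T'‖
  set c := ⟪b j, b' j⟫
  have hweyl : |lam j - lam' j| ≤ ε := b.abs_sub_le_opNorm_sub hT hT' hlam hlam' j
  have hres : ‖T (b' j) - lam' j • b' j‖ ≤ ε := calc
    ‖T (b' j) - lam' j • b' j‖ = ‖(T - T') (b' j)‖ := by rw [← hT']; rfl
    _ ≤ ε * ‖b' j‖ := (T - T').le_opNorm _
    _ = ε := by rw [b'.norm_eq_one, mul_one]
  have hsin : 1 - c ^ 2 ≤ 4 * ε ^ 2 / g ^ 2 := by
    rw [le_div_iff₀ (by positivity)]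
    rcases le_or_gt g (2 * ε) with hεg | hεg
    · nlinarith [sq_nonneg c]
    · have hgap' : ∀ i ≠ j, g / 2 ≤ |lam i - lam' j| := fun i hi => by
        linarith [hgap i hi, abs_sub_le (lam i) (lam' j) (lam j), abs_sub_comm (lam' j) (lam j)]
      have := b.sq_mul_norm_sq_sub_inner_sq_le hT (by positivity) hgap' (b' j)
      rw [b'.norm_eq_one] at this
      nlinarith [pow_le_pow_left₀ (norm_nonneg _) hres 2]
  obtain ⟨v, hv, hvw⟩ := exists_mem_pair_norm_sub_sq_le (b.norm_eq_one j) (b'.norm_eq_one j)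
  have hv_eigen : ‖v‖ = 1 ∧ T v = lam j • v := by
    rcases hv with rfl | rfl
    · exact ⟨b.norm_eq_one j, hT j⟩
    · exact ⟨by rw [norm_neg, b.norm_eq_one], by rw [map_neg, hT, smul_neg]⟩
  have h8 : ((2 : ℝ) ^ ((3 : ℝ) / 2)) ^ 2 = 8 := by
    rw [← Real.rpow_natCast, ← Real.rpow_mul (by norm_num)]; norm_num
  refine ⟨v, hv_eigen.1, hv_eigen.2, (pow_le_pow_iff_left₀ (norm_nonneg _) (by positivity)
    two_ne_zero).1 ?_⟩
  calc ‖v - b' j‖ ^ 2 ≤ 2 * (1 - c ^ 2) := hvw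
    _ ≤ 2 * (4 * ε ^ 2 / g ^ 2) := by gcongr
    _ = (2 ^ ((3 : ℝ) / 2) * ε / g) ^ 2 := by rw [div_pow, mul_pow, h8]; ring

end OrthonormalBasis

namespace Matrix

variable {ι : Type*} [Fintype ι] [DecidableEq ι] {U : Matrix ι ι ℝ}

lemma orthonormal_toLp_col (hU : Uᵀ * U = 1) :
    Orthonormal ℝ fun i => WithLp.toLp 2 (U.col i) := by
  rw [orthonormal_iff_ite]
  intro i k
  rw [EuclideanSpace.inner_toLp_toLp, star_trivial, ← one_apply, ← hU, mul_apply, dotProduct]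
  simp [col, mul_comm]

noncomputable def colOrthonormalBasis (U : Matrix ι ι ℝ) (hU : Uᵀ * U = 1) :
    OrthonormalBasis ι ℝ (EuclideanSpace ℝ ι) :=
  .mk (orthonormal_toLp_col hU)
    ((orthonormal_toLp_col hU).linearIndependent.span_eq_top_of_card_eq_finrank' (by simp)).ge

@[simp]
lemma colOrthonormalBasis_apply (hU : Uᵀ * U = 1) (i : ι) :
    colOrthonormalBasis U hU i = WithLp.toLp 2 (U.col i) := by
  simp [colOrthonormalBasis]

lemma toEuclideanCLM_colOrthonormalBasis {A : Matrix ι ι ℝ} {lam : ι → ℝ} (hU : Uᵀ * U = 1)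
    (hA : A = U * diagonal lam * Uᵀ) (i : ι) :
    toEuclideanCLM (𝕜 := ℝ) A (colOrthonormalBasis U hU i) =
      lam i • colOrthonormalBasis U hU i := by
  rw [colOrthonormalBasis_apply, toEuclideanCLM_toLp, ← WithLp.toLp_smul, ← mulVec_single_one,
    hA, ← mulVec_mulVec, ← mulVec_mulVec, mulVec_mulVec _ Uᵀ, hU, one_mulVec,
    diagonal_mulVec_single, mul_one, ← mulVec_smul, ← Pi.single_smul', smul_eq_mul, mul_one]

end Matrix

theorem eigenvector_perturbation_general
    {n : ℕ} (A Atil U Util : Matrix (Fin n) (Fin n) ℝ)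
    (lam lamtil : Fin n → ℝ) (j : Fin n) (g : ℝ)
    (hU : Uᵀ * U = 1) (hUtil : Utilᵀ * Util = 1)
    (hdiagA : A = U * Matrix.diagonal lam * Uᵀ)
    (hdiagAtil : Atil = Util * Matrix.diagonal lamtil * Utilᵀ)
    (hmono : ∀ i i' : Fin n, i ≤ i' → lam i' ≤ lam i)
    (hmonotil : ∀ i i' : Fin n, i ≤ i' → lamtil i' ≤ lamtil i)
    (hg : 0 < g)
    (hgap₁ : ∀ i : Fin n, i < j → g ≤ lam i - lam j)
    (hgap₂ : ∀ i : Fin n, j < i → g ≤ lam j - lam i) :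
    ∃ v vtil : EuclideanSpace ℝ (Fin n),
      ‖v‖ = 1 ∧ ‖vtil‖ = 1 ∧
      Matrix.toEuclideanCLM (𝕜 := ℝ) A v = lam j • v ∧
      Matrix.toEuclideanCLM (𝕜 := ℝ) Atil vtil = lamtil j • vtil ∧
      ‖v - vtil‖
        ≤ 2 ^ ((3 : ℝ) / 2)
            * ‖Matrix.toEuclideanCLM (𝕜 := ℝ) A
                - Matrix.toEuclideanCLM (𝕜 := ℝ) Atil‖ / g := by
  have hgap : ∀ i ≠ j, g ≤ |lam i - lam j| := fun i hi => by
    rcases hi.lt_or_gt with h | h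
    · exact (hgap₁ i h).trans (le_abs_self _)
    · exact (hgap₂ i h).trans (abs_sub_comm (lam i) (lam j) ▸ le_abs_self _)
  have hAtil := toEuclideanCLM_colOrthonormalBasis hUtil hdiagAtil
  obtain ⟨v, hv, hAv, hvw⟩ := (colOrthonormalBasis U hU).exists_norm_sub_le_of_eigengap
    (toEuclideanCLM_colOrthonormalBasis hU hdiagA) hAtil hmono hmonotil hg hgap
  exact ⟨v, _, hv, OrthonormalBasis.norm_eq_one _ j, hAv, hAtil j, hvw⟩

/-- Davis–Kahan type eigenvector perturbation bound (Yu–Wang–Samworth, Cor. 1):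
`A` and `Ã` are symmetric with eigenvalues `λ` and `λ̃` in decreasing order (as
witnessed by orthogonal diagonalizations); if the eigengap of `A` at index `j`
is at least `g > 0` (i.e. `λ_i − λ_j ≥ g` for `i < j` and `λ_j − λ_i ≥ g` for
`i > j`) then there are unit eigenvectors `v` of `A` for `λ_j` and `ṽ` of `Ã`
for `λ̃_j` with `‖v − ṽ‖ ≤ 2^{3/2} ‖A − Ã‖_op / g`. -/
theorem eigenvector_perturbation
    {n : ℕ} (A Atil U Util : Matrix (Fin n) (Fin n) ℝ)
    (lam lamtil : Fin n → ℝ) (j : Fin n) (g : ℝ)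
    (hA : A.IsSymm) (hAtil : Atil.IsSymm)
    (hU : Uᵀ * U = 1) (hUtil : Utilᵀ * Util = 1)
    (hdiagA : A = U * Matrix.diagonal lam * Uᵀ)
    (hdiagAtil : Atil = Util * Matrix.diagonal lamtil * Utilᵀ)
    (hmono : ∀ i i' : Fin n, i ≤ i' → lam i' ≤ lam i)
    (hmonotil : ∀ i i' : Fin n, i ≤ i' → lamtil i' ≤ lamtil i)
    (hg : 0 < g)
    (hgap₁ : ∀ i : Fin n, i < j → g ≤ lam i - lam j)
    (hgap₂ : ∀ i : Fin n, j < i → g ≤ lam j - lam i) :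
    ∃ v vtil : EuclideanSpace ℝ (Fin n),
      ‖v‖ = 1 ∧ ‖vtil‖ = 1 ∧
      Matrix.toEuclideanCLM (𝕜 := ℝ) A v = lam j • v ∧
      Matrix.toEuclideanCLM (𝕜 := ℝ) Atil vtil = lamtil j • vtil ∧
      ‖v - vtil‖
        ≤ 2 ^ ((3 : ℝ) / 2)
            * ‖Matrix.toEuclideanCLM (𝕜 := ℝ) A
                - Matrix.toEuclideanCLM (𝕜 := ℝ) Atil‖ / g :=
  eigenvector_perturbation_general A Atil U Util lam lamtil j g hU hUtil hdiagA hdiagAtil hmono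
    hmonotil hg hgap₁ hgap₂
end

section
/- Let M ∈ R^{n×k} have rank k and suppose there exists a row index r such that the entries μ_{r,1},...,μ_{r,k} of row r are pairwise distinct, and ω_j > 0 for all j. Given the exact tensors M_1 = MΩ, M_2 = M diag(Ω) M', and the slices M_{3,i} = M_i diag(Ω) diag(μ_{i,1},...,μ_{i,k}) M_i' for all i, the SVTD algorithm output (M̃, Ω̃) satisfies M̃ = M Π D and Ω̃ determined accordingly, where Π is a permutation and D a diagonal sign matrix; in particular the columns of M and the weights Ω are identified up to relabeling of topics. -/
open Matrix

/-- The thirdSlice `M_{3,i} = M_i diag(ω) diag(μ_{i,·}) M_iᵀ` of the third moment. -/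
noncomputable def thirdSlice {n k : ℕ} (M : Matrix (Fin n) (Fin k) ℝ)
    (ω : Fin k → ℝ) (i : Fin n) :
    Matrix {i' : Fin n // i' ≠ i} {i' : Fin n // i' ≠ i} ℝ :=
  dropRow M i * Matrix.diagonal ω * Matrix.diagonal (fun j => M i j)
    * (dropRow M i)ᵀ

/-- The whitened thirdSlice `H_i = E_i⋆ M_{3,i} (E_iᵀ)⋆`. -/
noncomputable def whitened {n k : ℕ} (M E : Matrix (Fin n) (Fin k) ℝ)
    (ω : Fin k → ℝ) (i : Fin n) : Matrix (Fin k) (Fin k) ℝ :=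
  pinv (dropRow E i) * thirdSlice M ω i * (pinv (dropRow E i))ᵀ

/-- A square real matrix of full rank is a unit. -/
lemma aux_isUnit {k : ℕ} {A : Matrix (Fin k) (Fin k) ℝ} (h : A.rank = k) :
    IsUnit A := by
  rw [← Matrix.mulVec_surjective_iff_isUnit]
  have h2 : LinearMap.range A.mulVecLin = ⊤ := by
    apply Submodule.eq_top_of_finrank_eq
    exact h.trans (Module.finrank_fin_fun ℝ).symm
  intro v
  obtain ⟨w, hw⟩ := LinearMap.range_eq_top.mp h2 v
  exact ⟨w, hw⟩

/-- The pseudoinverse of a full-column-rank matrix is a left inverse. -/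
lemma pinv_mul_self {m : Type*} [Fintype m] {k : ℕ}
    (A : Matrix m (Fin k) ℝ) (h : A.rank = k) : pinv A * A = 1 := by
  have hu : IsUnit (Aᵀ * A) := aux_isUnit (by rw [Matrix.rank_transpose_mul_self]; exact h)
  rw [pinv, Matrix.mul_assoc, Matrix.nonsing_inv_mul _ ((Matrix.isUnit_iff_isUnit_det _).mp hu)]

lemma dropRow_mul {n k : ℕ} (A : Matrix (Fin n) (Fin k) ℝ)
    (B : Matrix (Fin k) (Fin k) ℝ) (r : Fin n) :
    dropRow (A * B) r = dropRow A r * B := by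
  ext i j
  simp [dropRow, Matrix.mul_apply]

/-- Over ℝ, `N Nᵀ = 0` implies `N = 0`. -/
lemma eq_zero_of_mul_transpose_self {m : Type*} [Fintype m] {k : ℕ}
    {N : Matrix m (Fin k) ℝ} (h : N * Nᵀ = 0) : N = 0 := by
  have ht : Nᵀ = Nᴴ := by ext i j; simp [Matrix.conjTranspose_apply]
  rw [ht] at h
  exact Matrix.self_mul_conjTranspose_eq_zero.mp h

/-- Correctness of SVTD on exact moments: if `M` has rank `k`, `ω_j > 0`, and
row `r` of `M` has pairwise distinct entries, then, given a rank-`k` factor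
`E Eᵀ = M diag(ω) Mᵀ` and the orthogonal diagonalization
`H_r = O diag(d) Oᵀ` obtained by SVD, the matrix `M̃` whose `(i,j)` entry is
the `j`-th diagonal entry of `Oᵀ H_i O`, together with the solution `Ω̃` of
`M̃ Ω̃ = M₁ = M Ω`, recovers `(M, Ω)` up to a permutation `σ` of the topics and
column signs. -/
theorem svtd_exact_recovery
    {n k : ℕ} (M E : Matrix (Fin n) (Fin k) ℝ) (ω : Fin k → ℝ) (r : Fin n)
    (O : Matrix (Fin k) (Fin k) ℝ) (d : Fin k → ℝ)
    (Mtil : Matrix (Fin n) (Fin k) ℝ) (Ωtil : Fin k → ℝ)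
    (hω : ∀ j, 0 < ω j)
    (hM : M.rank = k)
    (hMi : ∀ i : Fin n, (dropRow M i).rank = k)
    (hEi : ∀ i : Fin n, (dropRow E i).rank = k)
    (hdistinct : ∀ j j' : Fin k, j ≠ j' → M r j ≠ M r j')
    (hfact : M * Matrix.diagonal ω * Mᵀ = E * Eᵀ) (hE : E.rank = k)
    (hO : Oᵀ * O = 1)
    (hHr : whitened M E ω r = O * Matrix.diagonal d * Oᵀ)
    (hMtil : ∀ (i : Fin n) (j : Fin k),
      Mtil i j = (Oᵀ * whitened M E ω i * O) j j)
    (hΩtil : Mtil.mulVec Ωtil = M.mulVec ω) :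
    ∃ σ : Equiv.Perm (Fin k), ∃ s : Fin k → ℝ,
      (∀ j, s j = 1 ∨ s j = -1) ∧
      (∀ (i : Fin n) (j : Fin k), Mtil i j = M i (σ j) * s j) ∧
      (∀ j : Fin k, Ωtil j = s j * ω (σ j)) := by
  classical
  set sq : Fin k → ℝ := fun j => Real.sqrt (ω j) with hsq
  have hsqpos : ∀ j, 0 < sq j := fun j => Real.sqrt_pos.mpr (hω j)
  have hsqmul : ∀ j, sq j * sq j = ω j := fun j => Real.mul_self_sqrt (hω j).le
  set S : Matrix (Fin k) (Fin k) ℝ := Matrix.diagonal sq with hS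
  set S' : Matrix (Fin k) (Fin k) ℝ := Matrix.diagonal (fun j => (sq j)⁻¹) with hS'
  have hSS' : S * S' = 1 := by
    rw [hS, hS', Matrix.diagonal_mul_diagonal]
    have hfun : (fun j => sq j * (sq j)⁻¹) = fun _ => (1 : ℝ) :=
      funext fun j => mul_inv_cancel₀ (hsqpos j).ne'
    rw [hfun, Matrix.diagonal_one]
  set G : Matrix (Fin n) (Fin k) ℝ := M * S with hG
  have hGG : G * Gᵀ = E * Eᵀ := by
    have h1 : S * Sᵀ = Matrix.diagonal ω := by
      rw [hS, Matrix.diagonal_transpose, Matrix.diagonal_mul_diagonal, funext hsqmul]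
    rw [hG, Matrix.transpose_mul, ← hfact]
    calc M * S * (Sᵀ * Mᵀ) = M * (S * Sᵀ) * Mᵀ := by simp only [Matrix.mul_assoc]
      _ = M * Matrix.diagonal ω * Mᵀ := by rw [h1]
  have hpE : pinv E * E = 1 := pinv_mul_self E hE
  have hEpT : Eᵀ * (pinv E)ᵀ = 1 := by
    rw [← Matrix.transpose_mul, hpE, Matrix.transpose_one]
  set Q : Matrix (Fin k) (Fin k) ℝ := pinv E * G with hQ
  have hproj : Eᵀ * ((pinv E)ᵀ * Eᵀ) = Eᵀ := by
    rw [← Matrix.mul_assoc, hEpT, Matrix.one_mul]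
  have hGGX : ∀ {p : Type} [Fintype p] (X : Matrix (Fin n) p ℝ),
      G * (Gᵀ * X) = E * (Eᵀ * X) := by
    intro p _ X
    rw [← Matrix.mul_assoc, hGG, Matrix.mul_assoc]
  have hpEX : ∀ {p : Type} [Fintype p] (X : Matrix (Fin k) p ℝ),
      pinv E * (E * X) = X := by
    intro p _ X
    rw [← Matrix.mul_assoc, hpE, Matrix.one_mul]
  have hEQ : E * Q = G := by
    have hN : (G - E * Q) * (G - E * Q)ᵀ = 0 := by
      rw [Matrix.transpose_sub, Matrix.sub_mul, Matrix.mul_sub, Matrix.mul_sub, hQ]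
      simp only [Matrix.transpose_mul, Matrix.mul_assoc]
      simp only [hGGX, hproj, hpEX, hGG]
      abel
    have h0 := eq_zero_of_mul_transpose_self hN
    rw [sub_eq_zero] at h0
    exact h0.symm
  have hQQt : Q * Qᵀ = 1 := by
    rw [hQ]
    simp only [Matrix.transpose_mul, Matrix.mul_assoc]
    rw [hGGX, hpEX, hEpT]
  have hQtQ : Qᵀ * Q = 1 := mul_eq_one_comm.mp hQQt
  have hWA : ∀ i : Fin n, pinv (dropRow E i) * dropRow M i = Q * S' := by
    intro i
    have h1 : dropRow M i * S = dropRow E i * Q := by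
      rw [← dropRow_mul, ← dropRow_mul, ← hG, hEQ]
    have h2 : pinv (dropRow E i) * (dropRow E i * Q) = Q := by
      rw [← Matrix.mul_assoc, pinv_mul_self _ (hEi i), Matrix.one_mul]
    calc pinv (dropRow E i) * dropRow M i
        = pinv (dropRow E i) * dropRow M i * (S * S') := by rw [hSS', Matrix.mul_one]
      _ = pinv (dropRow E i) * (dropRow M i * S) * S' := by
          simp only [Matrix.mul_assoc]
      _ = Q * S' := by rw [h1, h2]
  have hH : ∀ i : Fin n,
      whitened M E ω i = Q * Matrix.diagonal (fun j => M i j) * Qᵀ := by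
    intro i
    have hd : S' * (Matrix.diagonal ω * (Matrix.diagonal (fun j => M i j) * S'))
        = Matrix.diagonal (fun j => M i j) := by
      rw [hS', Matrix.diagonal_mul_diagonal, Matrix.diagonal_mul_diagonal,
        Matrix.diagonal_mul_diagonal]
      refine congrArg Matrix.diagonal (funext fun j => ?_)
      have hne := (hsqpos j).ne'
      rw [← hsqmul j]
      field_simp
    have hAW : (dropRow M i)ᵀ * (pinv (dropRow E i))ᵀ = S' * Qᵀ := by
      have h3 := congrArg Matrix.transpose (hWA i)
      rw [Matrix.transpose_mul, Matrix.transpose_mul] at h3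
      rw [h3, hS', Matrix.diagonal_transpose]
    rw [whitened, thirdSlice]
    simp only [Matrix.mul_assoc]
    rw [hAW, ← Matrix.mul_assoc (pinv (dropRow E i)), hWA i]
    simp only [Matrix.mul_assoc]
    have h4 : S' * (Matrix.diagonal ω * (Matrix.diagonal (fun j => M i j) * (S' * Qᵀ)))
        = S' * (Matrix.diagonal ω * (Matrix.diagonal (fun j => M i j) * S')) * Qᵀ := by
      simp only [Matrix.mul_assoc]
    rw [h4, hd]
  set P : Matrix (Fin k) (Fin k) ℝ := Qᵀ * O with hP
  have hPtP : Pᵀ * P = 1 := by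
    rw [hP, Matrix.transpose_mul, Matrix.transpose_transpose]
    rw [Matrix.mul_assoc, ← Matrix.mul_assoc Q, hQQt, Matrix.one_mul, hO]
  have hPPt : P * Pᵀ = 1 := mul_eq_one_comm.mp hPtP
  have hint : Matrix.diagonal (fun j => M r j) * P = P * Matrix.diagonal d := by
    have h1 : Qᵀ * (whitened M E ω r * O) = Matrix.diagonal (fun j => M r j) * P := by
      rw [hH r]
      simp only [Matrix.mul_assoc]
      rw [← Matrix.mul_assoc Qᵀ Q, hQtQ, Matrix.one_mul, hP]
    have h2 : Qᵀ * (whitened M E ω r * O) = P * Matrix.diagonal d := by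
      rw [hHr]
      simp only [Matrix.mul_assoc]
      rw [hO, Matrix.mul_one, hP, Matrix.mul_assoc]
    rw [← h1, h2]
  have hintApp : ∀ a b, M r a * P a b = P a b * d b := by
    intro a b
    have h5 := congrFun (congrFun hint a) b
    rwa [Matrix.diagonal_mul, Matrix.mul_diagonal] at h5
  have hcol : ∀ b, ∑ a, P a b * P a b = 1 := by
    intro b
    have h6 := congrFun (congrFun hPtP b) b
    rw [Matrix.mul_apply] at h6
    simpa [Matrix.one_apply, Matrix.transpose_apply] using h6
  have hexists : ∀ b, ∃ a, P a b ≠ 0 := by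
    intro b
    by_contra h
    push_neg at h
    have h7 := hcol b
    simp [h] at h7
  have huniq : ∀ b a a', P a b ≠ 0 → P a' b ≠ 0 → a = a' := by
    intro b a a' ha ha'
    by_contra hne
    have h1 : M r a = d b :=
      mul_right_cancel₀ ha (by rw [hintApp a b, mul_comm])
    have h2 : M r a' = d b :=
      mul_right_cancel₀ ha' (by rw [hintApp a' b, mul_comm])
    exact hdistinct a a' hne (h1.trans h2.symm)
  choose σ0 hσ0 using hexists
  have hzero : ∀ b a, a ≠ σ0 b → P a b = 0 := by
    intro b a ha
    by_contra h
    exact ha (huniq b a (σ0 b) h (hσ0 b))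
  have hσ0inj : Function.Injective σ0 := by
    intro b b' hbb
    by_contra hne
    have horth := congrFun (congrFun hPtP b) b'
    rw [Matrix.mul_apply] at horth
    simp only [Matrix.transpose_apply, Matrix.one_apply, if_neg hne] at horth
    rw [Finset.sum_eq_single (σ0 b)] at horth
    · exact mul_ne_zero (hσ0 b) (hbb ▸ hσ0 b') horth
    · intro c _ hc
      rw [hzero b c hc, zero_mul]
    · intro h; exact absurd (Finset.mem_univ _) h
  have hsq1 : ∀ b, P (σ0 b) b * P (σ0 b) b = 1 := by
    intro b
    have h8 := hcol b
    rw [Finset.sum_eq_single (σ0 b)] at h8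
    · exact h8
    · intro c _ hc
      rw [hzero b c hc, zero_mul]
    · intro h; exact absurd (Finset.mem_univ _) h
  let σ : Equiv.Perm (Fin k) := Equiv.ofBijective σ0 (Finite.injective_iff_bijective.mp hσ0inj)
  have hdiag : ∀ (i : Fin n) (j : Fin k),
      (Oᵀ * whitened M E ω i * O) j j = M i (σ0 j) := by
    intro i j
    have hform : Oᵀ * whitened M E ω i * O
        = Pᵀ * ((Matrix.diagonal fun j' => M i j') * P) := by
      rw [hH i, hP]
      simp only [Matrix.transpose_mul, Matrix.transpose_transpose, Matrix.mul_assoc]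
    rw [hform, Matrix.mul_apply]
    rw [Finset.sum_eq_single (σ0 j)]
    · rw [Matrix.transpose_apply, Matrix.diagonal_mul]
      rw [mul_comm (M i (σ0 j)) (P (σ0 j) j), ← mul_assoc, hsq1 j, one_mul]
    · intro c _ hc
      rw [Matrix.transpose_apply, hzero j c hc, zero_mul]
    · intro h; exact absurd (Finset.mem_univ _) h
  have hMtilEq : ∀ (i : Fin n) (j : Fin k), Mtil i j = M i (σ0 j) := by
    intro i j
    rw [hMtil i j, hdiag i j]
  have hMinj : Function.Injective M.mulVec := by
    have hu : IsUnit (Mᵀ * M) := aux_isUnit (by rw [Matrix.rank_transpose_mul_self]; exact hM)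
    intro x y hxy
    have h1 : (Mᵀ * M).mulVec x = (Mᵀ * M).mulVec y := by
      rw [← Matrix.mulVec_mulVec, ← Matrix.mulVec_mulVec, hxy]
    exact Matrix.mulVec_injective_iff_isUnit.mpr hu h1
  have hveq : (fun j' => Ωtil (σ.symm j')) = ω := by
    apply hMinj
    funext i
    show ∑ j', M i j' * Ωtil (σ.symm j') = ∑ j', M i j' * ω j'
    rw [← Equiv.sum_comp σ (fun j' => M i j' * Ωtil (σ.symm j'))]
    simp only [Equiv.symm_apply_apply]
    calc ∑ j, M i (σ j) * Ωtil j = ∑ j, Mtil i j * Ωtil j := by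
          refine Finset.sum_congr rfl fun j _ => ?_
          have : M i (σ j) = Mtil i j := (hMtilEq i j).symm
          rw [this]
      _ = Mtil.mulVec Ωtil i := rfl
      _ = M.mulVec ω i := by rw [hΩtil]
      _ = ∑ j, M i j * ω j := rfl
  refine ⟨σ, fun _ => 1, fun j => Or.inl rfl, fun i j => ?_, fun j => ?_⟩
  · rw [mul_one]
    exact hMtilEq i j
  · rw [one_mul]
    have h9 := congrFun hveq (σ j)
    simpa using h9
end
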